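/- Let A be a row circular binary m×n matrix with no dominating rows, with each row having between 2 and n−1 ones, and no column of all zeroes or all ones. For any row support C of A and any vertex v of Q*(A), 1 ≤ |C ∩ supp(v)| ≤ 2; moreover, if |C ∩ supp(v)| = 2, then C ∩ supp(v) consists of two cyclically consecutive elements of supp(v). -/

import Mathlib

open Finset

/-- Support of a vector. -/
def supp {n : ℕ} (x : Fin n → ℝ) : Set (Fin n) := {j | x j ≠ 0}

/-- Support of the `t`-th row of a matrix. -/
def rowSupp {m n : ℕ} (A : Matrix (Fin m) (Fin n) ℝ) (t : Fin m) : Set (Fin n) :=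
  {j | A t j ≠ 0}

def IsBinaryMatrix {m n : ℕ} (A : Matrix (Fin m) (Fin n) ℝ) : Prop :=
  ∀ t j, A t j = 0 ∨ A t j = 1

def IsBinaryVec {n : ℕ} (x : Fin n → ℝ) : Prop := ∀ j, x j = 0 ∨ x j = 1

/-- The polyhedron `{x | A x ≥ b, x ≥ 0}`. -/
def polyP {m n : ℕ} (A : Matrix (Fin m) (Fin n) ℝ) (b : Fin m → ℝ) : Set (Fin n → ℝ) :=
  {x | (∀ i, b i ≤ ∑ j, A i j * x j) ∧ ∀ j, 0 ≤ x j}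

/-- The linear relaxation `Q(A) = {x | A x ≥ 1, x ≥ 0}`. -/
def polyQ {m n : ℕ} (A : Matrix (Fin m) (Fin n) ℝ) : Set (Fin n → ℝ) :=
  {x | (∀ i, 1 ≤ ∑ j, A i j * x j) ∧ ∀ j, 0 ≤ x j}

/-- The set covering polyhedron `Q*(A)`: convex hull of nonnegative integer solutions of
`A x ≥ 1`. -/
def Qstar {m n : ℕ} (A : Matrix (Fin m) (Fin n) ℝ) : Set (Fin n → ℝ) :=
  convexHull ℝ {x | (∀ j, ∃ k : ℕ, x j = k) ∧ ∀ i, 1 ≤ ∑ j, A i j * x j}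

/-- A vertex of a convex set is an extreme point. -/
def IsVertex {n : ℕ} (S : Set (Fin n → ℝ)) (v : Fin n → ℝ) : Prop :=
  v ∈ S.extremePoints ℝ

/-- Two distinct vertices are adjacent when they lie on a common edge, i.e. the segment
joining them is a face (extreme subset) of `S`. -/
def AdjacentVerts {n : ℕ} (S : Set (Fin n → ℝ)) (v w : Fin n → ℝ) : Prop :=
  v ≠ w ∧ IsVertex S v ∧ IsVertex S w ∧ IsExtreme ℝ S (segment ℝ v w)

/-- There is a row support `C` with `C ∩ supp v = {p}` and `C ∩ supp v' = {p'}`. -/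
def jsgEdge {m n : ℕ} (A : Matrix (Fin m) (Fin n) ℝ) (v v' : Fin n → ℝ)
    (p p' : Fin n) : Prop :=
  ∃ t, rowSupp A t ∩ supp v = {p} ∧ rowSupp A t ∩ supp v' = {p'}

/-- The joint saturation graph of `v` and `v'` with respect to `A`. -/
def JSG {m n : ℕ} (A : Matrix (Fin m) (Fin n) ℝ) (v v' : Fin n → ℝ) :
    SimpleGraph (Fin n) where
  Adj p p' := p ≠ p' ∧ (jsgEdge A v v' p p' ∨ jsgEdge A v v' p' p)
  symm := ⟨fun p p' h => ⟨h.1.symm, h.2.symm⟩⟩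
  loopless := ⟨fun p h => h.1 rfl⟩

/-- The node set of the joint saturation graph: the symmetric difference of the supports. -/
def jsgNodes {n : ℕ} (v v' : Fin n → ℝ) : Set (Fin n) :=
  (supp v \ supp v') ∪ (supp v' \ supp v)

def JSGConnected {m n : ℕ} (A : Matrix (Fin m) (Fin n) ℝ) (v v' : Fin n → ℝ) : Prop :=
  ∀ p ∈ jsgNodes v v', ∀ q ∈ jsgNodes v v', (JSG A v v').Reachable p q

/-- One of the two partite sets is contained in a single connected component. -/
def JSGPartiteConnected {m n : ℕ} (A : Matrix (Fin m) (Fin n) ℝ) (v v' : Fin n → ℝ) : Prop :=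
  (∀ p ∈ supp v \ supp v', ∀ q ∈ supp v \ supp v', (JSG A v v').Reachable p q) ∨
  (∀ p ∈ supp v' \ supp v, ∀ q ∈ supp v' \ supp v, (JSG A v v').Reachable p q)

/-- Exactly two components, one of which is an isolated node. -/
def JSGAlmostConnected {m n : ℕ} (A : Matrix (Fin m) (Fin n) ℝ) (v v' : Fin n → ℝ) : Prop :=
  ∃ q ∈ jsgNodes v v', (∀ p, ¬ (JSG A v v').Adj q p) ∧ (jsgNodes v v' \ {q}).Nonempty ∧
    ∀ p ∈ jsgNodes v v' \ {q}, ∀ r ∈ jsgNodes v v' \ {q}, (JSG A v v').Reachable p r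

/-- The (directed) circular arc from `i` to `j` in `Fin n`. -/
def arc {n : ℕ} [NeZero n] (i j : Fin n) : Set (Fin n) :=
  {k | ∃ h : ℕ, h ≤ ((j - i : Fin n) : ℕ) ∧ k = i + (Fin.ofNat n h)}

/-- A matrix is row circular if each row support is a circular arc. -/
def RowCircular {m n : ℕ} [NeZero n] (A : Matrix (Fin m) (Fin n) ℝ) : Prop :=
  ∀ t, ∃ i j : Fin n, rowSupp A t = arc i j

/-- The standard assumptions: binary, no dominating rows, between 2 and n-1 ones per row,
no all-zero or all-one column. -/
def StandardAssumptions {m n : ℕ} (A : Matrix (Fin m) (Fin n) ℝ) : Prop :=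
  IsBinaryMatrix A ∧
  (∀ s t : Fin m, s ≠ t → ¬ rowSupp A s ⊆ rowSupp A t) ∧
  (∀ t, 2 ≤ (rowSupp A t).ncard ∧ (rowSupp A t).ncard ≤ n - 1) ∧
  (∀ j : Fin n, (∃ t, A t j ≠ 0) ∧ (∃ t, A t j = 0))

/-- `a` and `b` occur consecutively (in either order) in the list `l`. -/
def ListConsec {α : Type*} (l : List α) (a b : α) : Prop :=
  ∃ k : ℕ, (l[k]? = some a ∧ l[k+1]? = some b) ∨ (l[k]? = some b ∧ l[k+1]? = some a)

/-- `a` and `b` occur cyclically consecutively (in either order) in the list `l`. -/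
def CycConsec {α : Type*} (l : List α) (a b : α) : Prop :=
  ∃ k : ℕ, k < l.length ∧
    ((l[k]? = some a ∧ l[(k+1) % l.length]? = some b) ∨
     (l[k]? = some b ∧ l[(k+1) % l.length]? = some a))

/-- The set `S` induces a path (possibly a single node) in `G`. -/
def IsPathOn {n : ℕ} (G : SimpleGraph (Fin n)) (S : Set (Fin n)) : Prop :=
  ∃ l : List (Fin n), l.Nodup ∧ (∀ x, x ∈ S ↔ x ∈ l) ∧
    (∀ a b, a ∈ S → G.Adj a b → ListConsec l a b) ∧
    (∀ a b, ListConsec l a b → G.Adj a b)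

/-- The set `S` induces a cycle in `G`. -/
def IsCycleOn {n : ℕ} (G : SimpleGraph (Fin n)) (S : Set (Fin n)) : Prop :=
  ∃ l : List (Fin n), 3 ≤ l.length ∧ l.Nodup ∧ (∀ x, x ∈ S ↔ x ∈ l) ∧
    (∀ a b, a ∈ S → G.Adj a b → CycConsec l a b) ∧
    (∀ a b, CycConsec l a b → G.Adj a b)

/-- `p` and `q` are cyclically consecutive elements of `S`. -/
def CyclConsecIn {n : ℕ} [NeZero n] (S : Set (Fin n)) (p q : Fin n) : Prop :=
  p ≠ q ∧ p ∈ S ∧ q ∈ S ∧ (arc p q ∩ S = {p, q} ∨ arc q p ∩ S = {p, q})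

/-- The circulant matrix `C(n,2)` with row supports `{t, t+1}` (mod n). -/
def Cn2 (n : ℕ) [NeZero n] : Matrix (Fin n) (Fin n) ℝ :=
  fun t j => if j = t ∨ j = t + 1 then 1 else 0

/-- Append a row to a matrix. -/
def appendRow {m n : ℕ} (A : Matrix (Fin m) (Fin n) ℝ) (a : Fin n → ℝ) :
    Matrix (Fin (m+1)) (Fin n) ℝ :=
  fun t j => if h : (t : ℕ) < m then A ⟨t, h⟩ j else a j

/-- A set of points is integral if all its extreme points are integer vectors. -/
def IsIntegralSet {n : ℕ} (S : Set (Fin n → ℝ)) : Prop :=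
  ∀ x ∈ S.extremePoints ℝ, ∀ j, ∃ z : ℤ, x j = z

/-- A binary matrix is minimally nonideal if `Q(A)` is not integral but both restrictions
`Q(A) ∩ {x_i = 0}` and `Q(A) ∩ {x_i = 1}` are integral for every coordinate `i`. -/
def MinimallyNonideal {m n : ℕ} (A : Matrix (Fin m) (Fin n) ℝ) : Prop :=
  ¬ IsIntegralSet (polyQ A) ∧
  ∀ i : Fin n, IsIntegralSet (polyQ A ∩ {x | x i = 0}) ∧
               IsIntegralSet (polyQ A ∩ {x | x i = 1})

/-- The matrix of the degenerate projective plane with `t+1` points and lines. -/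
def Jmat (t : ℕ) : Matrix (Fin (t+1)) (Fin (t+1)) ℝ :=
  fun i j => if i = 0 then (if j = 0 then 0 else 1) else (if j = 0 ∨ j = i then 1 else 0)

/-- `A` is isomorphic to some degenerate projective plane matrix `J_t`, `t ≥ 2`. -/
def IsoToDegenProjPlane {m n : ℕ} (A : Matrix (Fin m) (Fin n) ℝ) : Prop :=
  ∃ t : ℕ, 2 ≤ t ∧ ∃ (σ : Fin m ≃ Fin (t+1)) (τ : Fin n ≃ Fin (t+1)),
    ∀ i j, A i j = Jmat t (σ i) (τ j)

/-- `A₁` is the core of `A`: a square nonsingular row submatrix with `r` ones per row and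
per column, all other rows of `A` having more than `r` ones. -/
def IsCore {m n : ℕ} (A : Matrix (Fin m) (Fin n) ℝ) (A₁ : Matrix (Fin n) (Fin n) ℝ)
    (r : ℕ) : Prop :=
  2 ≤ r ∧ A₁.det ≠ 0 ∧
  (∃ f : Fin n → Fin m, Function.Injective f ∧ (∀ i, A₁ i = A (f i)) ∧
    ∀ t, t ∉ Set.range f → r < (rowSupp A t).ncard) ∧
  (∀ i, (rowSupp A₁ i).ncard = r) ∧ (∀ j, {i | A₁ i j ≠ 0}.ncard = r)

/-- `B₁` is the core of the blocker of `A`: a square nonsingular matrix whose rows are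
binary vertices of `Q*(A)` with `s` ones per row and per column, all other binary
vertices of `Q*(A)` having more than `s` ones. -/
def IsBlockerCore {m n : ℕ} (A : Matrix (Fin m) (Fin n) ℝ) (B₁ : Matrix (Fin n) (Fin n) ℝ)
    (s : ℕ) : Prop :=
  2 ≤ s ∧ B₁.det ≠ 0 ∧
  (∀ i, IsBinaryVec (B₁ i) ∧ IsVertex (Qstar A) (B₁ i)) ∧
  Function.Injective (fun i => B₁ i) ∧
  (∀ i, (rowSupp B₁ i).ncard = s) ∧ (∀ j, {i | B₁ i j ≠ 0}.ncard = s) ∧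
  (∀ x, IsBinaryVec x → IsVertex (Qstar A) x → (∀ i, x ≠ B₁ i) → s < (supp x).ncard)

/-- `w^i` for `n = 3ν`: the complement of the characteristic vector of the residue class
`i` mod 3. -/
def wVec (n : ℕ) (i : Fin 3) : Fin n → ℝ :=
  fun k => if (k : ℕ) % 3 = (i : ℕ) then 0 else 1

/-- `a^i` for `n = 3ν`: the characteristic vector of the residue class `i` mod 3
(`a¹ = (1,0,0,1,0,0,…)` corresponds to `i = 0`). -/
def aVec (n : ℕ) (i : ℕ) : Fin n → ℝ :=
  fun k => if (k : ℕ) % 3 = i then 1 else 0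

/-
Minimality of a vertex `v` of `Q*(A)` gives every element `p` of its support a private row:
otherwise `v - eₚ` would still be feasible and `v` would be the midpoint of `v ± eₚ`. If a
circular row support `C` met `supp v` in three elements, the private row of the middle one
would be an arc containing it but neither of the outer two, hence contained in `C`,
contradicting the absence of dominating rows. If `C` meets `supp v` in two elements, the part
of `C` between them is an arc free of further elements of `supp v`.
-/

theorem Set.exists_lt_lt_of_two_lt_ncard {α β : Type*} [LinearOrder β] {s : Set α} {f : α → β}
    (hf : Set.InjOn f s) (hs : 2 < s.ncard) :
    ∃ a ∈ s, ∃ b ∈ s, ∃ c ∈ s, f a < f b ∧ f b < f c := by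
  have hfin : s.Finite := Set.finite_of_ncard_pos (by omega)
  have hne : s.Nonempty := Set.nonempty_of_ncard_ne_zero (by omega)
  obtain ⟨a, ha, hmin⟩ := s.exists_min_image f hfin hne
  obtain ⟨c, hc, hmax⟩ := s.exists_max_image f hfin hne
  have hnsub : ¬ s ⊆ {a, c} := fun hsub =>
    absurd ((Set.ncard_le_ncard hsub).trans (Set.ncard_insert_le a {c})) (by rw [Set.ncard_singleton]; omega)
  obtain ⟨b, hb, hbac⟩ := Set.not_subset.mp hnsub
  simp only [Set.mem_insert_iff, Set.mem_singleton_iff, not_or] at hbac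
  exact ⟨a, ha, b, hb, c, hc,
    (hmin b hb).lt_of_ne fun h => hbac.1 (hf hb ha h.symm),
    (hmax b hb).lt_of_ne fun h => hbac.2 (hf hb hc h)⟩

section Arcs

variable {n : ℕ}

def cycDist (u w : Fin n) : ℕ := ((w - u : Fin n) : ℕ)

theorem cycDist_lt (u w : Fin n) : cycDist u w < n := (w - u).is_lt

variable [NeZero n]

theorem cycDist_self (u : Fin n) : cycDist u u = 0 := by simp [cycDist]

theorem cycDist_injective (u : Fin n) : Function.Injective (cycDist u) :=
  fun _ _ h => sub_left_inj.mp (Fin.ext h)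

theorem cycDist_add_cycDist (u k w : Fin n) :
    cycDist u k + cycDist k w = cycDist u w ∨ cycDist u k + cycDist k w = cycDist u w + n := by
  have hmod : cycDist u w = (cycDist u k + cycDist k w) % n := by
    rw [cycDist, ← sub_add_sub_cancel w k u, Fin.val_add, Nat.add_comm]; rfl
  have := cycDist_lt u k
  have := cycDist_lt k w
  rcases Nat.lt_or_ge (cycDist u k + cycDist k w) n with hlt | hge
  · left; rw [hmod, Nat.mod_eq_of_lt hlt]
  · right; rw [hmod, Nat.mod_eq_sub_mod hge, Nat.mod_eq_of_lt (by omega)]; omega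

theorem mem_arc_iff {u w k : Fin n} : k ∈ arc u w ↔ cycDist u k ≤ cycDist u w := by
  constructor
  · rintro ⟨h, hh, rfl⟩
    have hlt : h < n := hh.trans_lt (cycDist_lt u w)
    simpa [cycDist, Fin.val_ofNat, Nat.mod_eq_of_lt hlt] using hh
  · intro h
    refine ⟨cycDist u k, h, ?_⟩
    have : Fin.ofNat n (cycDist u k) = k - u := Fin.ext (by simp [cycDist])
    rw [this, add_sub_cancel]

theorem left_mem_arc (u w : Fin n) : u ∈ arc u w := by
  simp [mem_arc_iff, cycDist_self]

theorem right_mem_arc (u w : Fin n) : w ∈ arc u w := mem_arc_iff.mpr le_rfl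

theorem arc_subset_arc {i j p q : Fin n} (hpq : cycDist i p ≤ cycDist i q)
    (hq : cycDist i q ≤ cycDist i j) : arc p q ⊆ arc i j := by
  intro x hx
  rw [mem_arc_iff] at hx ⊢
  have := cycDist_add_cycDist i p q
  have := cycDist_add_cycDist i p x
  have := cycDist_lt i q
  have := cycDist_lt p x
  have := cycDist_lt i x
  have := cycDist_lt p q
  omega

theorem arc_subset_arc_of_between {i j i' j' p₁ p₂ p₃ : Fin n}
    (h₁₂ : cycDist i p₁ < cycDist i p₂) (h₂₃ : cycDist i p₂ < cycDist i p₃)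
    (h₃ : cycDist i p₃ ≤ cycDist i j) (hp₂ : p₂ ∈ arc i' j') (hp₁ : p₁ ∉ arc i' j')
    (hp₃ : p₃ ∉ arc i' j') : arc i' j' ⊆ arc i j := by
  intro x hx
  rw [mem_arc_iff] at hx hp₁ hp₂ hp₃ ⊢
  -- Were `x` beyond `p₃`, the arc through `p₂` and `x` would contain one of the two cyclic
  -- paths between them, and these pass through `p₃` and `p₁` respectively.
  have := cycDist_add_cycDist i' i p₁
  have := cycDist_add_cycDist i' i p₂
  have := cycDist_add_cycDist i' i p₃
  have := cycDist_add_cycDist i' i x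
  have := cycDist_lt i' p₁
  have := cycDist_lt i' p₃
  omega

theorem cyclConsecIn_of_arc_inter_eq_pair {i j p q : Fin n} {S : Set (Fin n)}
    (h : arc i j ∩ S = {p, q}) (hpq : p ≠ q) : CyclConsecIn S p q := by
  wlog hle : cycDist i p ≤ cycDist i q generalizing p q
  · obtain ⟨-, hq, hp, hcases⟩ := this (Set.pair_comm p q ▸ h) hpq.symm (le_of_not_ge hle)
    exact ⟨hpq, hp, hq, by rwa [Set.pair_comm, or_comm]⟩
  have hp : p ∈ arc i j ∩ S := h ▸ Set.mem_insert p {q}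
  have hq : q ∈ arc i j ∩ S := h ▸ Set.mem_insert_of_mem p rfl
  refine ⟨hpq, hp.2, hq.2, Or.inl (subset_antisymm ?_ ?_)⟩
  · exact h ▸ Set.inter_subset_inter_left S (arc_subset_arc hle (mem_arc_iff.mp hq.1))
  · rintro x (rfl | rfl)
    · exact ⟨left_mem_arc x q, hp.2⟩
    · exact ⟨right_mem_arc p x, hq.2⟩

end Arcs

section CoveringPolyhedron

variable {m n : ℕ} {A : Matrix (Fin m) (Fin n) ℝ} {v x : Fin n → ℝ}

/-- `Qstar A` is by definition the convex hull of this set. -/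
def coverPoints (A : Matrix (Fin m) (Fin n) ℝ) : Set (Fin n → ℝ) :=
  {x | (∀ j, ∃ k : ℕ, x j = k) ∧ ∀ i, 1 ≤ ∑ j, A i j * x j}

theorem IsBinaryMatrix.nonneg (hA : IsBinaryMatrix A) (i : Fin m) (j : Fin n) : 0 ≤ A i j := by
  rcases hA i j with h | h <;> simp [h]

theorem IsVertex.mem_coverPoints (hv : IsVertex (Qstar A) v) : v ∈ coverPoints A :=
  extremePoints_convexHull_subset hv

theorem one_le_of_mem_coverPoints_of_mem_supp (hx : x ∈ coverPoints A) {j : Fin n}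
    (hj : j ∈ supp x) : 1 ≤ x j := by
  obtain ⟨k, hk⟩ := hx.1 j
  have hk0 : k ≠ 0 := by rintro rfl; exact hj (by simpa using hk)
  rw [hk]; exact_mod_cast Nat.one_le_iff_ne_zero.mpr hk0

theorem rowSupp_inter_supp_nonempty (hx : x ∈ coverPoints A) (i : Fin m) :
    (rowSupp A i ∩ supp x).Nonempty := by
  by_contra hempty
  have hzero : ∀ j, A i j * x j = 0 := fun j => by
    by_contra hj
    exact hempty ⟨j, left_ne_zero_of_mul hj, right_ne_zero_of_mul hj⟩
  have := hx.2 i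
  simp only [hzero, sum_const_zero] at this
  linarith

theorem add_single_mem_coverPoints (hA : ∀ i j, 0 ≤ A i j) (hx : x ∈ coverPoints A)
    (p : Fin n) : x + Pi.single p 1 ∈ coverPoints A := by
  refine ⟨fun j => ?_, fun i => (hx.2 i).trans (sum_le_sum fun j _ => ?_)⟩
  · obtain ⟨k, hk⟩ := hx.1 j
    by_cases hj : j = p
    · subst hj; exact ⟨k + 1, by simp [hk]⟩
    · exact ⟨k, by simp [hj, hk]⟩
  · exact mul_le_mul_of_nonneg_left
      (le_add_of_nonneg_right (by by_cases hj : j = p <;> simp [hj])) (hA i j)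

/-- A vertex `v` is the midpoint of `v ± eₚ`, and `v + eₚ` is always feasible. -/
theorem IsVertex.sub_single_notMem_coverPoints (hA : ∀ i j, 0 ≤ A i j)
    (hv : IsVertex (Qstar A) v) (p : Fin n) : v - Pi.single p 1 ∉ coverPoints A := by
  intro hsub
  have hadd := add_single_mem_coverPoints hA hv.mem_coverPoints p
  have hmid : v ∈ openSegment ℝ (v - Pi.single p 1) (v + Pi.single p 1) :=
    ⟨1 / 2, 1 / 2, by norm_num, by norm_num, by norm_num, by module⟩
  have heq := (mem_extremePoints.mp hv).2 _ (subset_convexHull ℝ _ hsub) _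
    (subset_convexHull ℝ _ hadd) hmid
  simpa using congrFun heq.1 p

theorem IsVertex.exists_rowSupp_inter_supp_eq_singleton (hA : IsBinaryMatrix A)
    (hv : IsVertex (Qstar A) v) {p : Fin n} (hp : p ∈ supp v) :
    ∃ s, rowSupp A s ∩ supp v = {p} := by
  have hvS := hv.mem_coverPoints
  by_contra! hshared
  refine hv.sub_single_notMem_coverPoints hA.nonneg p ⟨fun j => ?_, fun s => ?_⟩
  · obtain ⟨k, hk⟩ := hvS.1 j
    by_cases hj : j = p
    · subst hj
      have hk1 : 1 ≤ k := by exact_mod_cast hk ▸ one_le_of_mem_coverPoints_of_mem_supp hvS hp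
      exact ⟨k - 1, by simp [hk, Nat.cast_sub hk1]⟩
    · exact ⟨k, by simp [hj, hk]⟩
  · have hsum : ∑ j, A s j * (v - Pi.single p 1 : Fin n → ℝ) j = ∑ j, A s j * v j - A s p := by
      simp [mul_sub, sum_sub_distrib, Pi.single_apply]
    rw [hsum]
    rcases hA s p with hsp | hsp
    · simpa [hsp] using hvS.2 s
    · have hpmem : p ∈ rowSupp A s ∩ supp v := ⟨by simp [rowSupp, hsp], hp⟩
      obtain ⟨q, hq, hqp⟩ : ∃ q ∈ rowSupp A s ∩ supp v, q ≠ p := by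
        by_contra! hall
        exact hshared s (Set.eq_singleton_iff_unique_mem.mpr ⟨hpmem, hall⟩)
      have hsq : A s q = 1 := (hA s q).resolve_left hq.1
      have htwo : A s p * v p + A s q * v q ≤ ∑ j, A s j * v j :=
        add_le_sum (fun j _ => mul_nonneg (hA.nonneg s j) (by obtain ⟨k, hk⟩ := hvS.1 j; simp [hk]))
          (mem_univ p) (mem_univ q) hqp.symm
      have := one_le_of_mem_coverPoints_of_mem_supp hvS hp
      have := one_le_of_mem_coverPoints_of_mem_supp hvS hq.2
      rw [hsp, hsq] at htwo
      linarith

end CoveringPolyhedron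

theorem IsVertex.ncard_rowSupp_inter_supp_le_two {m n : ℕ} [NeZero n]
    {A : Matrix (Fin m) (Fin n) ℝ} (hA : IsBinaryMatrix A)
    (hdom : ∀ s t : Fin m, s ≠ t → ¬ rowSupp A s ⊆ rowSupp A t) (hcirc : RowCircular A)
    {v : Fin n → ℝ} (hv : IsVertex (Qstar A) v) (t : Fin m) :
    (rowSupp A t ∩ supp v).ncard ≤ 2 := by
  by_contra! hthree
  obtain ⟨i, j, hC⟩ := hcirc t
  obtain ⟨p₁, hp₁, p₂, hp₂, p₃, hp₃, h₁₂, h₂₃⟩ := Set.exists_lt_lt_of_two_lt_ncard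
    ((cycDist_injective i).injOn (s := rowSupp A t ∩ supp v)) hthree
  obtain ⟨s, hs⟩ := hv.exists_rowSupp_inter_supp_eq_singleton hA hp₂.2
  have hnot : ∀ {q}, q ∈ rowSupp A t ∩ supp v → q ≠ p₂ → q ∉ rowSupp A s := fun hq hqp hqs =>
    hqp (Set.mem_singleton_iff.mp (hs ▸ ⟨hqs, hq.2⟩))
  have hp₁s := hnot hp₁ (ne_of_apply_ne (cycDist i) h₁₂.ne)
  have hst : s ≠ t := by
    rintro rfl
    exact hp₁s hp₁.1
  obtain ⟨i', j', hD⟩ := hcirc s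
  refine hdom s t hst ?_
  rw [hD, hC]
  refine arc_subset_arc_of_between h₁₂ h₂₃ (mem_arc_iff.mp (hC ▸ hp₃.1)) ?_ ?_ ?_
  · exact hD ▸ (hs.symm ▸ Set.mem_singleton p₂ : p₂ ∈ rowSupp A s ∩ supp v).1
  · exact hD ▸ hp₁s
  · exact hD ▸ hnot hp₃ (ne_of_apply_ne (cycDist i) h₂₃.ne')

/-- a row support of a row circular matrix meets the support of any vertex
of `Q*(A)` in 1 or 2 elements, and if in 2, these are cyclically consecutive in the
support. -/
theorem stmt5 {m n : ℕ} [NeZero n] (A : Matrix (Fin m) (Fin n) ℝ)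
    (hstd : StandardAssumptions A) (hcirc : RowCircular A)
    (v : Fin n → ℝ) (hv : IsVertex (Qstar A) v) (t : Fin m) :
    1 ≤ (rowSupp A t ∩ supp v).ncard ∧ (rowSupp A t ∩ supp v).ncard ≤ 2 ∧
      ((rowSupp A t ∩ supp v).ncard = 2 →
        ∃ p q : Fin n, rowSupp A t ∩ supp v = {p, q} ∧ CyclConsecIn (supp v) p q) := by
  obtain ⟨hA, hdom, -, -⟩ := hstd
  refine ⟨(Set.ncard_pos (Set.toFinite _)).mpr
      (rowSupp_inter_supp_nonempty hv.mem_coverPoints t),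
    hv.ncard_rowSupp_inter_supp_le_two hA hdom hcirc t, fun htwo => ?_⟩
  obtain ⟨p, q, hpq, hpair⟩ := Set.ncard_eq_two.mp htwo
  obtain ⟨i, j, hC⟩ := hcirc t
  exact ⟨p, q, hpair, cyclConsecIn_of_arc_inter_eq_pair (hC ▸ hpair) hpq⟩
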